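/- For a subset A of a topological space X and a point x, we have x ∈ e*-cl_θ(A) if and only if U ∩ A ≠ ∅ for every e*-regular set U containing x. -/

import Mathlib

open Set Topology

variable {X : Type*} [TopologicalSpace X]

/-- δ-closure of A. -/
def deltaCl (A : Set X) : Set X :=
  {x | ∀ U : Set X, IsOpen U → x ∈ U → (interior (closure U) ∩ A).Nonempty}

/-- A is e*-open if A ⊆ cl(int(δ-cl A)). -/
def EStarOpen (A : Set X) : Prop := A ⊆ closure (interior (deltaCl A))

/-- A is e*-closed if its complement is e*-open. -/
def EStarClosed (A : Set X) : Prop := EStarOpen Aᶜ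

/-- e*-closure: intersection of all e*-closed supersets. -/
def eStarCl (A : Set X) : Set X := ⋂₀ {F | EStarClosed F ∧ A ⊆ F}

/-- e*-interior: union of all e*-open subsets. -/
def eStarInt (A : Set X) : Set X := ⋃₀ {U | EStarOpen U ∧ U ⊆ A}

/-- e*-regular: both e*-open and e*-closed. -/
def EStarRegular (A : Set X) : Prop := EStarOpen A ∧ EStarClosed A

/-- e*-θ-closure. -/
def eStarClTheta (A : Set X) : Set X :=
  {x | ∀ U : Set X, EStarOpen U → x ∈ U → (eStarCl U ∩ A).Nonempty}

/-- e*-θ-closed. -/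
def EStarThetaClosed (A : Set X) : Prop := A = eStarClTheta A

/-- e*-θ-open. -/
def EStarThetaOpen (A : Set X) : Prop := EStarThetaClosed Aᶜ

/-- quasi e*-θ-closed. -/
def QEStarThetaClosed (A : Set X) : Prop :=
  ∀ U : Set X, EStarThetaOpen U → A ⊆ U → eStarClTheta A ⊆ U

/-- e*-θ-kernel. -/
def eStarKerTheta (A : Set X) : Set X := ⋂₀ {U | EStarThetaOpen U ∧ A ⊆ U}

/-! An e*-regular set `U` equals its own e*-closure, so it is one of the sets `eStarCl U` tested in
`e*-cl_θ`. Conversely, for `U` e*-open, `eStarCl U` is e*-regular: it is e*-closed, and it lies in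
the closed, hence e*-closed, set `cl (int (δ-cl U))`, which by monotonicity of `δ-cl` makes it
e*-open. -/

lemma deltaCl_mono {A B : Set X} (h : A ⊆ B) : deltaCl A ⊆ deltaCl B :=
  fun _ hx U hU hxU => (hx U hU hxU).mono (inter_subset_inter_right _ h)

lemma subset_deltaCl (A : Set X) : A ⊆ deltaCl A :=
  fun x hx _ hU hxU => ⟨x, interior_maximal subset_closure hU hxU, hx⟩

lemma IsOpen.eStarOpen {A : Set X} (h : IsOpen A) : EStarOpen A :=
  fun _ hx => subset_closure (interior_maximal (subset_deltaCl A) h hx)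

lemma IsClosed.eStarClosed {F : Set X} (h : IsClosed F) : EStarClosed F :=
  h.isOpen_compl.eStarOpen

lemma EStarOpen.subset_closure_interior_deltaCl {A B : Set X} (hA : EStarOpen A) (h : A ⊆ B) :
    A ⊆ closure (interior (deltaCl B)) :=
  hA.trans (closure_mono (interior_mono (deltaCl_mono h)))

lemma eStarOpen_sUnion {S : Set (Set X)} (h : ∀ U ∈ S, EStarOpen U) : EStarOpen (⋃₀ S) := by
  rintro x ⟨U, hU, hxU⟩
  exact (h U hU).subset_closure_interior_deltaCl (subset_sUnion_of_mem hU) hxU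

lemma subset_eStarCl (A : Set X) : A ⊆ eStarCl A :=
  fun _ hx _ hF => hF.2 hx

lemma eStarCl_subset {A F : Set X} (hF : EStarClosed F) (h : A ⊆ F) : eStarCl A ⊆ F :=
  fun _ hx => hx F ⟨hF, h⟩

lemma eStarClosed_eStarCl (A : Set X) : EStarClosed (eStarCl A) := by
  rw [EStarClosed, eStarCl, compl_sInter]
  exact eStarOpen_sUnion (by rintro _ ⟨F, ⟨hF, -⟩, rfl⟩; exact hF)

lemma EStarClosed.eStarCl_eq {F : Set X} (hF : EStarClosed F) : eStarCl F = F :=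
  (eStarCl_subset hF subset_rfl).antisymm (subset_eStarCl F)

lemma EStarOpen.eStarOpen_eStarCl {U : Set X} (hU : EStarOpen U) : EStarOpen (eStarCl U) :=
  (eStarCl_subset isClosed_closure.eStarClosed hU).trans
    (closure_mono (interior_mono (deltaCl_mono (subset_eStarCl U))))

lemma EStarOpen.eStarRegular_eStarCl {U : Set X} (hU : EStarOpen U) :
    EStarRegular (eStarCl U) :=
  ⟨hU.eStarOpen_eStarCl, eStarClosed_eStarCl U⟩

theorem stmt13 (A : Set X) (x : X) :
    x ∈ eStarClTheta A ↔ ∀ U : Set X, EStarRegular U → x ∈ U → (U ∩ A).Nonempty := by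
  constructor
  · rintro hx U ⟨hUo, hUc⟩ hxU
    simpa only [hUc.eStarCl_eq] using hx U hUo hxU
  · intro h U hUo hxU
    exact h (eStarCl U) hUo.eStarRegular_eStarCl (subset_eStarCl U hxU)
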